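/- arXiv:1301.2986 — 5 statements merged into one kernel-verified Lean document; each statement's English description precedes it below -/
import Mathlib

section
/- For any prime p ≥ 5 and nonnegative integers k, s, the binomial coefficient C(kp, sp) is congruent to C(k, s) modulo p^3. -/
open Polynomial Finset

noncomputable def qInt (n : ℕ) : Polynomial ℤ := ∑ i ∈ Finset.range n, X ^ i

noncomputable def qBinom : ℕ → ℕ → Polynomial ℤ
  | _, 0 => 1
  | 0, _ + 1 => 0
  | n + 1, k + 1 => qBinom n k + X ^ (k + 1) * qBinom n (k + 1)

/-!
Removing the multiples of `p` from `(m p)!` leaves `p ^ m * m !` times the product `P m` of the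
blocks `(j p + 1) ⋯ (j p + p - 1)`, so that `C(k p, s p) * P s * P (k - s) = C(k, s) * P k`, and
it suffices that every block is `≡ (p - 1)!` mod `p ^ 3`.

Pairing `i` with `p - i` gives `(j p + i) (j p + p - i) = i (p - i) + q` with `q = p ^ 2 j (j + 1)`,
so modulo `q ^ 2` the square of a block is `(p - 1)! ^ 2 + q * ∑ᵢ ∏_{l ≠ i} l (p - l)`. Modulo `p`
that sum is `-(p - 1)! ^ 2 * ∑ᵢ i⁻²`, which vanishes for `p ≥ 5`. The congruence of squares
mod `p ^ 3` lifts to the blocks themselves, as they are `≡ (p - 1)!` mod the odd prime `p`.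
-/

open Nat

theorem Finset.sq_dvd_prod_add_sub {ι R : Type*} [DecidableEq ι] [CommRing R] (s : Finset ι)
    (m : ι → R) (q : R) :
    q ^ 2 ∣ ∏ i ∈ s, (m i + q) - ∏ i ∈ s, m i - q * ∑ i ∈ s, ∏ j ∈ s.erase i, m j := by
  induction s using Finset.induction_on with
  | empty => simp
  | insert a s ha ih =>
    obtain ⟨t, ht⟩ := ih
    have herase : ∀ i ∈ s, ∏ j ∈ (insert a s).erase i, m j = m a * ∏ j ∈ s.erase i, m j :=
      fun i hi => by
        rw [erase_insert_of_ne (ne_of_mem_of_not_mem hi ha).symm,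
          prod_insert fun h => ha (mem_of_mem_erase h)]
    refine ⟨m a * t + ∑ i ∈ s, ∏ j ∈ s.erase i, m j + q * t, ?_⟩
    rw [prod_insert ha, prod_insert ha, sum_insert ha, erase_insert ha, sum_congr rfl herase,
      ← mul_sum]
    linear_combination (m a + q) * ht

theorem Int.ModEq.of_sq_modEq {p x y : ℤ} (hp : Prime p) (hp2 : ¬p ∣ 2) (hy : ¬p ∣ y) (n : ℕ)
    (hxy : x ≡ y [ZMOD p]) (hsq : x ^ 2 ≡ y ^ 2 [ZMOD p ^ n]) : x ≡ y [ZMOD p ^ n] := by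
  have hcop : IsCoprime (p ^ n) (y + x) := by
    refine IsCoprime.pow_left (hp.coprime_iff_not_dvd.mpr fun hsum => ?_)
    have h2y : p ∣ 2 * y := by
      simpa [two_mul] using dvd_add hsum (Int.modEq_iff_dvd.mp hxy)
    exact (hp.dvd_or_dvd h2y).elim hp2 hy
  obtain ⟨c, hc⟩ := Int.modEq_iff_dvd.mp hsq
  exact Int.modEq_iff_dvd.mpr (hcop.dvd_of_dvd_mul_right ⟨c, by linear_combination hc⟩)

theorem ZMod.sum_range_natCast {n : ℕ} [NeZero n] {M : Type*} [AddCommMonoid M]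
    (f : ZMod n → M) : ∑ i ∈ range n, f i = ∑ x, f x :=
  sum_nbij' (↑) ZMod.val (fun _ _ => mem_univ _) (fun x _ => mem_range.2 x.val_lt)
    (fun _ hi => ZMod.val_cast_of_lt (mem_range.1 hi)) (fun x _ => ZMod.natCast_zmod_val x)
    (fun _ _ => rfl)

theorem FiniteField.sum_inv_pow_lt_card_sub_one (K : Type*) [Field K] [Fintype K] (i : ℕ)
    (h : i < Fintype.card K - 1) : ∑ x : K, x⁻¹ ^ i = 0 :=
  (Equiv.sum_comp (Equiv.inv K) (· ^ i)).trans (sum_pow_lt_card_sub_one K i h)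

theorem ZMod.sum_range_inv_add_one_sq {p : ℕ} [Fact p.Prime] (hp5 : 5 ≤ p) :
    ∑ i ∈ range (p - 1), (((i : ZMod p) + 1) ^ 2)⁻¹ = 0 := by
  have h := FiniteField.sum_inv_pow_lt_card_sub_one (ZMod p) 2 (by rw [ZMod.card]; omega)
  rw [← ZMod.sum_range_natCast, show range p = range (p - 1 + 1) by congr; omega,
    sum_range_succ'] at h
  simpa using h

theorem prime_dvd_sum_prod_erase {p : ℕ} (hp : p.Prime) (hp5 : 5 ≤ p) :
    (p : ℤ) ∣
      ∑ i ∈ range (p - 1), ∏ j ∈ (range (p - 1)).erase i, ((j + 1) * (↑(p - 1) - j) : ℤ) := by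
  have := Fact.mk hp
  rw [← ZMod.intCast_zmod_eq_zero_iff_dvd]
  push_cast [Nat.cast_sub hp.one_le, ZMod.natCast_self]
  set m : ℕ → ZMod p := fun j => -((j : ZMod p) + 1) ^ 2
  have hm : ∀ j : ℕ, ((j : ZMod p) + 1) * (0 - 1 - j) = m j := fun j => by ring
  have hm0 : ∀ i ∈ range (p - 1), m i ≠ 0 := fun i hi => by
    have : ((i + 1 : ℕ) : ZMod p) ≠ 0 := by
      rw [Ne, ZMod.natCast_eq_zero_iff]
      exact Nat.not_dvd_of_pos_of_lt i.succ_pos (by have := mem_range.1 hi; omega)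
    simpa [m] using this
  simp only [hm]
  rw [sum_congr rfl fun i hi => (eq_mul_inv_iff_mul_eq₀ (hm0 i hi)).mpr (prod_erase_mul _ m hi),
    ← mul_sum]
  simp [m, inv_neg, ZMod.sum_range_inv_add_one_sq hp5]

theorem Nat.ascFactorial_sq_eq_prod (n k : ℕ) :
    ((n + 1).ascFactorial k : ℤ) ^ 2 =
      ∏ i ∈ range k, ((i + 1) * (k - i) + n * (n + k + 1) : ℤ) := by
  rw [ascFactorial_eq_prod_range, sq]
  push_cast
  nth_rw 2 [← prod_range_reflect]
  rw [← prod_mul_distrib]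
  refine prod_congr rfl fun i hi => ?_
  have : ((k - 1 - i : ℕ) : ℤ) = k - 1 - i := by have := mem_range.1 hi; omega
  rw [this]
  ring

theorem ascFactorial_sq_modEq {p : ℕ} (hp : p.Prime) (hp5 : 5 ≤ p) (j : ℕ) :
    ((j * p + 1).ascFactorial (p - 1) : ℤ) ^ 2 ≡ ((p - 1)! : ℤ) ^ 2 [ZMOD p ^ 3] := by
  set m : ℕ → ℤ := fun i => (i + 1) * (↑(p - 1) - i)
  set q : ℤ := ↑(j * p) * (↑(j * p) + ↑(p - 1) + 1)
  have hq : q = p ^ 2 * (j * (j + 1)) := by push_cast [Nat.cast_sub hp.one_le, q]; ring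
  have hB := Nat.ascFactorial_sq_eq_prod (j * p) (p - 1)
  have hW : ((p - 1)! : ℤ) ^ 2 = ∏ i ∈ range (p - 1), m i := by
    simpa [one_ascFactorial] using Nat.ascFactorial_sq_eq_prod 0 (p - 1)
  obtain ⟨t, ht⟩ := Finset.sq_dvd_prod_add_sub (range (p - 1)) m q
  obtain ⟨E, hE⟩ := prime_dvd_sum_prod_erase hp hp5
  refine Int.modEq_iff_dvd.mpr ⟨-(p * (j * (j + 1)) ^ 2 * t + j * (j + 1) * E), ?_⟩
  linear_combination hW - hB - ht - q * hE - (p * E + t * (q + p ^ 2 * (j * (j + 1)))) * hq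

theorem ascFactorial_modEq_factorial {p : ℕ} (hp : p.Prime) (hp5 : 5 ≤ p) (j : ℕ) :
    (j * p + 1).ascFactorial (p - 1) ≡ (p - 1)! [MOD p ^ 3] := by
  have hmodp : (j * p + 1).ascFactorial (p - 1) ≡ (p - 1)! [MOD p] := by
    rw [← one_ascFactorial, ascFactorial_eq_prod_range, ascFactorial_eq_prod_range]
    refine Nat.ModEq.prod fun i _ => ?_
    simpa only [zero_add, add_assoc] using
      (Nat.modEq_zero_iff_dvd.2 (dvd_mul_left p j)).add_right (1 + i)
  have hp2 : ¬(p : ℤ) ∣ 2 := by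
    exact_mod_cast fun h => absurd (Nat.le_of_dvd two_pos h) (by omega)
  have hW : ¬(p : ℤ) ∣ (p - 1)! := by
    exact_mod_cast hp.coprime_iff_not_dvd.mp (hp.coprime_factorial_of_lt (by omega))
  rw [← Int.natCast_modEq_iff] at hmodp ⊢
  push_cast
  exact Int.ModEq.of_sq_modEq (Nat.prime_iff_prime_int.mp hp) hp2 hW 3 hmodp
    (ascFactorial_sq_modEq hp hp5 j)

-- the product of the integers in `[1, m * p]` not divisible by `p`
def primeFreeFactorial (p m : ℕ) : ℕ := ∏ j ∈ range m, (j * p + 1).ascFactorial (p - 1)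

theorem factorial_mul_eq_primeFreeFactorial {p : ℕ} (hp : 0 < p) (m : ℕ) :
    (m * p)! = p ^ m * m ! * primeFreeFactorial p m := by
  induction m with
  | zero => simp [primeFreeFactorial]
  | succ m ih =>
    have hsplit : (m + 1) * p = m * p + (p - 1) + 1 := by rw [add_one_mul]; omega
    rw [hsplit, factorial_succ, ← factorial_mul_ascFactorial, ih, ← hsplit]
    simp only [primeFreeFactorial, prod_range_succ, factorial_succ]
    ring

theorem choose_add_mul_mul_primeFreeFactorial {p : ℕ} (hp : 0 < p) (s d : ℕ) :
    ((s + d) * p).choose (s * p) * (primeFreeFactorial p s * primeFreeFactorial p d)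
      = (s + d).choose s * primeFreeFactorial p (s + d) := by
  have hchoose := add_choose_mul_factorial_mul_factorial (s * p) (d * p)
  rw [← choose_symm_add, ← add_mul, factorial_mul_eq_primeFreeFactorial hp s,
    factorial_mul_eq_primeFreeFactorial hp d, factorial_mul_eq_primeFreeFactorial hp (s + d),
    ← add_choose_mul_factorial_mul_factorial, ← choose_symm_add, pow_add] at hchoose
  refine Nat.eq_of_mul_eq_mul_left (by positivity : 0 < p ^ s * p ^ d * s ! * d !) ?_
  linear_combination hchoose

theorem primeFreeFactorial_modEq {p : ℕ} (hp : p.Prime) (hp5 : 5 ≤ p) (m : ℕ) :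
    primeFreeFactorial p m ≡ (p - 1)! ^ m [MOD p ^ 3] := by
  simpa only [primeFreeFactorial, prod_const, card_range] using
    Nat.ModEq.prod fun j (_ : j ∈ range m) => ascFactorial_modEq_factorial hp hp5 j

theorem ljunggren_congruence (p : ℕ) (hp : p.Prime) (hp5 : 5 ≤ p) (k s : ℕ) :
    ((k * p).choose (s * p) : ℤ) ≡ (k.choose s : ℕ) [ZMOD ((p : ℤ) ^ 3)] := by
  obtain hks | hsk := lt_or_ge k s
  · rw [choose_eq_zero_of_lt hks, choose_eq_zero_of_lt (Nat.mul_lt_mul_of_pos_right hks hp.pos)]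
  obtain ⟨d, rfl⟩ := Nat.exists_eq_add_of_le hsk
  have hcop : Nat.Coprime (p ^ 3) ((p - 1)! ^ (s + d)) :=
    (hp.coprime_factorial_of_lt (by omega)).pow 3 _
  have hP := primeFreeFactorial_modEq hp hp5
  have key : ((s + d) * p).choose (s * p) * (p - 1)! ^ (s + d)
      ≡ (s + d).choose s * (p - 1)! ^ (s + d) [MOD p ^ 3] :=
    calc ((s + d) * p).choose (s * p) * (p - 1)! ^ (s + d)
        ≡ ((s + d) * p).choose (s * p) * (primeFreeFactorial p s * primeFreeFactorial p d)
          [MOD p ^ 3] := by rw [pow_add]; exact ((hP s).mul (hP d)).symm.mul_left _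
      _ = (s + d).choose s * primeFreeFactorial p (s + d) :=
          choose_add_mul_mul_primeFreeFactorial hp.pos s d
      _ ≡ (s + d).choose s * (p - 1)! ^ (s + d) [MOD p ^ 3] := (hP (s + d)).mul_left _
  exact_mod_cast Int.natCast_modEq_iff.mpr (key.cancel_right_of_coprime hcop)
end

section
/- For nonnegative integers m, n, h, the q-Chu–Vandermonde identity holds: Σ_{k=0}^{h} C(n,k)_q C(m,h−k)_q q^{k(m−h+k)} = C(m+n, h)_q as polynomials in q. -/
open Polynomial Finset

lemma qBinom_zero_right (n : ℕ) : qBinom n 0 = 1 := by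
  cases n <;> rfl

lemma qBinom_eq_zero : ∀ {n k : ℕ}, n < k → qBinom n k = 0 := by
  intro n
  induction n with
  | zero => intro k hk; cases k with
    | zero => omega
    | succ k => rfl
  | succ n ih =>
    intro k hk
    cases k with
    | zero => omega
    | succ k =>
      show qBinom n k + X ^ (k+1) * qBinom n (k+1) = 0
      rw [ih (by omega), ih (by omega)]
      ring

lemma qBinom_succ_one (n : ℕ) : qBinom (n + 1) 1 = X ^ n + qBinom n 1 := by
  induction n with
  | zero => show qBinom 0 0 + X ^ 1 * qBinom 0 1 = _; simp [qBinom]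
  | succ n ih =>
    show qBinom (n+1) 0 + X ^ 1 * qBinom (n+1) 1 = _
    conv_lhs => rw [ih, qBinom_zero_right]
    conv_rhs => rw [show qBinom (n+1) 1 = qBinom n 0 + X ^ 1 * qBinom n 1 from rfl,
      qBinom_zero_right]
    ring

lemma qBinom_pascal' (n k : ℕ) :
    qBinom (n + 1) (k + 1) = X ^ (n - k) * qBinom n k + qBinom n (k + 1) := by
  induction n generalizing k with
  | zero =>
    cases k with
    | zero => show qBinom 0 0 + X ^ 1 * qBinom 0 1 = _; simp [qBinom]
    | succ k =>
      show qBinom 0 (k+1) + X ^ (k+2) * qBinom 0 (k+2) = _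
      simp [qBinom]
  | succ n ih =>
    cases k with
    | zero =>
      rw [Nat.sub_zero, qBinom_zero_right, mul_one]
      exact qBinom_succ_one (n+1)
    | succ k =>
      have hL : qBinom (n+2) (k+2) = qBinom (n+1) (k+1) + X ^ (k+2) * qBinom (n+1) (k+2) := rfl
      have hA : qBinom (n+1) (k+1) = qBinom n k + X ^ (k+1) * qBinom n (k+1) := rfl
      have hB : qBinom (n+1) (k+2) = qBinom n (k+1) + X ^ (k+2) * qBinom n (k+2) := rfl
      rw [hL]
      conv_lhs => rw [ih k, ih (k+1)]
      conv_rhs => rw [hA, hB]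
      rw [Nat.succ_sub_succ]
      rcases le_or_gt k n with hkn | hkn
      · rcases eq_or_lt_of_le hkn with rfl | hlt
        · rw [qBinom_eq_zero (show k < k + 1 by omega),
            qBinom_eq_zero (show k < k + 2 by omega)]
          ring
        · have h1 : (k + 2) + (n - (k+1)) = (n - k) + (k + 1) := by omega
          have hx : (X : Polynomial ℤ) ^ (k+2) * X ^ (n - (k+1)) =
              X ^ (n - k) * X ^ (k+1) := by
            rw [← pow_add, ← pow_add, h1]
          linear_combination qBinom n (k+1) * hx
      · rw [qBinom_eq_zero (show n < k + 1 by omega),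
          qBinom_eq_zero (show n < k + 2 by omega)]
        ring

theorem q_chu_vandermonde (m n h : ℕ) :
    ∑ k ∈ Finset.range (h + 1),
        qBinom n k * qBinom m (h - k) * X ^ (k * (m - (h - k))) =
      qBinom (m + n) h := by
  induction n generalizing h with
  | zero =>
    rw [Finset.sum_eq_single_of_mem 0 (by simp)]
    · simp [qBinom_zero_right]
    · intro k _ hk
      obtain ⟨j, rfl⟩ := Nat.exists_eq_succ_of_ne_zero hk
      rw [show qBinom 0 (j+1) = 0 from rfl]
      ring
  | succ n ih =>
    cases h with
    | zero => simp [qBinom_zero_right]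
    | succ h =>
      rw [Finset.sum_range_succ']
      have key : ∀ k ∈ Finset.range (h + 1),
          qBinom (n+1) (k+1) * qBinom m (h + 1 - (k+1)) * X ^ ((k+1) * (m - (h + 1 - (k+1)))) =
            X ^ (m + n - h) * (qBinom n k * qBinom m (h - k) * X ^ (k * (m - (h - k)))) +
            qBinom n (k+1) * qBinom m (h + 1 - (k+1)) * X ^ ((k+1) * (m - (h + 1 - (k+1)))) := by
        intro k hk
        rw [Finset.mem_range] at hk
        rw [Nat.succ_sub_succ, qBinom_pascal']
        rcases le_or_gt k n with hkn | hkn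
        · rcases le_or_gt (h - k) m with hhm | hhm
          · have hexp : (n - k) + (k + 1) * (m - (h - k)) =
                (m + n - h) + k * (m - (h - k)) := by
              have h2 : (k + 1) * (m - (h-k)) = k * (m - (h-k)) + (m - (h-k)) := by
                rw [Nat.succ_mul]
              rw [h2]
              set c := m - (h - k) with hc
              omega
            have hx : (X : Polynomial ℤ) ^ (n - k) * X ^ ((k+1) * (m - (h - k))) =
                X ^ (m + n - h) * X ^ (k * (m - (h - k))) := by
              rw [← pow_add, ← pow_add, hexp]
            linear_combination (qBinom n k * qBinom m (h - k)) * hx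
          · rw [qBinom_eq_zero hhm]
            ring
        · rw [qBinom_eq_zero hkn, qBinom_eq_zero (show n < k + 1 by omega)]
          ring
      rw [Finset.sum_congr rfl key, Finset.sum_add_distrib, ← Finset.mul_sum, ih h]
      have hB := ih (h + 1)
      rw [Finset.sum_range_succ'] at hB
      have hR : qBinom (m + (n+1)) (h+1) =
          X ^ (m + n - h) * qBinom (m + n) h + qBinom (m + n) (h + 1) := by
        rw [show m + (n+1) = (m+n) + 1 by ring, qBinom_pascal']
      rw [hR, add_assoc, qBinom_zero_right, ← hB, qBinom_zero_right]
end

section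
/- For any prime p ≥ 5 and nonnegative integer m, C(mp + p − 1, p − 1) ≡ 1 modulo p^3. -/
open Polynomial Finset

lemma evalF (a : ℤ) (n : ℕ) :
    (∏ k ∈ Finset.range n, (X + C ((k:ℤ)+1))).eval a = ∏ k ∈ Finset.range n, (a + k + 1) := by
  simp [Polynomial.eval_prod, add_assoc]

lemma monicF (n : ℕ) : (∏ k ∈ Finset.range n, (X + C ((k:ℤ)+1))).Monic :=
  monic_prod_of_monic _ _ (fun k _ => monic_X_add_C _)

lemma degF (n : ℕ) : (∏ k ∈ Finset.range n, (X + C ((k:ℤ)+1))).natDegree = n := by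
  rw [Polynomial.natDegree_prod _ _ (fun k _ => (monic_X_add_C _).ne_zero),
    Finset.sum_congr rfl (fun k _ => natDegree_X_add_C _)]
  simp

lemma mapF (p : ℕ) (hp : p.Prime) (hp5 : 5 ≤ p) :
    (∏ k ∈ Finset.range (p-1), (X + C ((k:ℤ)+1))).map (Int.castRingHom (ZMod p))
      = X ^ (p-1) - 1 := by
  haveI : Fact p.Prime := ⟨hp⟩
  set F' : (ZMod p)[X] := (∏ k ∈ Finset.range (p-1), (X + C ((k:ℤ)+1))).map (Int.castRingHom (ZMod p)) with hF'
  have hF'eq : F' = ∏ k ∈ Finset.range (p-1), (X + C (((k:ℕ):ZMod p)+1)) := by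
    simp [hF', Polynomial.map_prod]
  have hmono : F'.Monic := (monicF _).map _
  have hdeg : F'.natDegree = p - 1 := by
    rw [hF', (monicF _).natDegree_map]; exact degF _
  have hpodd : Odd p := hp.odd_of_ne_two (by omega)
  have heven : Even (p - 1) := Nat.Odd.sub_odd hpodd odd_one
  have hne : ∀ k ∈ Finset.range (p-1), (((k:ℕ):ZMod p)+1) ≠ 0 := by
    intro k hk
    rw [Finset.mem_range] at hk
    have : (((k+1 : ℕ)):ZMod p) ≠ 0 := by
      rw [Ne, ZMod.natCast_eq_zero_iff]
      exact Nat.not_dvd_of_pos_of_lt (by omega) (by omega)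
    simpa using this
  have hXC : (X ^ (p-1) - 1 : (ZMod p)[X]) = X ^ (p-1) - C 1 := by rw [map_one]
  have hmono2 : (X ^ (p-1) - 1 : (ZMod p)[X]).Monic := by
    rw [hXC]; exact monic_X_pow_sub_C _ (by omega)
  have hdeg2 : (X ^ (p-1) - 1 : (ZMod p)[X]).degree = ((p-1 : ℕ) : WithBot ℕ) := by
    rw [hXC]; exact degree_X_pow_sub_C (by omega) 1
  set G : (ZMod p)[X] := F' - (X ^ (p-1) - 1) with hG
  have hGdeg : G.natDegree < p - 1 := by
    rcases eq_or_ne G 0 with h0 | h0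
    · rw [h0]; simpa using (by omega : 0 < p - 1)
    · have hlt : G.degree < ((p-1 : ℕ) : WithBot ℕ) := by
        have := Polynomial.degree_sub_lt
          (by rw [hdeg2, Polynomial.degree_eq_natDegree hmono.ne_zero, hdeg])
          hmono.ne_zero (by rw [hmono.leadingCoeff, hmono2.leadingCoeff])
        rwa [Polynomial.degree_eq_natDegree hmono.ne_zero, hdeg] at this
      exact (Polynomial.natDegree_lt_iff_degree_lt h0).mpr hlt
  have hG0 : G = 0 := by
    apply Polynomial.eq_zero_of_natDegree_lt_card_of_eval_eq_zero' G
      ((Finset.range (p-1)).image (fun k => -(((k:ℕ):ZMod p)+1)))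
    · intro a ha
      rw [Finset.mem_image] at ha
      obtain ⟨k, hk, rfl⟩ := ha
      have h1 : F'.eval (-(((k:ℕ):ZMod p)+1)) = 0 := by
        rw [hF'eq, Polynomial.eval_prod]
        apply Finset.prod_eq_zero hk
        simp only [Polynomial.eval_add, Polynomial.eval_X, Polynomial.eval_C]
        ring
      have h2 : (X ^ (p-1) - 1 : (ZMod p)[X]).eval (-(((k:ℕ):ZMod p)+1)) = 0 := by
        simp only [Polynomial.eval_sub, Polynomial.eval_pow, Polynomial.eval_X,
          Polynomial.eval_one]
        rw [heven.neg_pow, ZMod.pow_card_sub_one_eq_one (hne k hk), sub_self]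
      rw [hG, Polynomial.eval_sub, h1, h2, sub_zero]
    · rw [Finset.card_image_of_injOn]
      · simpa using hGdeg
      · intro a ha b hb hab
        rw [Finset.mem_coe, Finset.mem_range] at ha hb
        have hab' := neg_inj.mp hab
        have : ((a+1 : ℕ) : ZMod p) = ((b+1 : ℕ) : ZMod p) := by push_cast; exact hab'
        have := congrArg ZMod.val this
        rwa [ZMod.val_cast_of_lt (by omega), ZMod.val_cast_of_lt (by omega),
          Nat.add_right_cancel_iff] at this
  have := sub_eq_zero.mp hG0
  exact this

lemma asc_prod (a n : ℕ) : (a+1).ascFactorial n = ∏ k ∈ Finset.range n, (a + k + 1) := by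
  induction n with
  | zero => simp [Nat.ascFactorial_zero]
  | succ n ih => rw [Nat.ascFactorial_succ, Finset.prod_range_succ, ih]; ring

lemma coeff_dvd (p : ℕ) (hp : p.Prime) (hp5 : 5 ≤ p) (j : ℕ) (hj1 : 1 ≤ j) (hj2 : j ≤ p - 2) :
    (p:ℤ) ∣ (∏ k ∈ Finset.range (p-1), (X + C ((k:ℤ)+1))).coeff j := by
  haveI : Fact p.Prime := ⟨hp⟩
  have h := congrArg (fun q => Polynomial.coeff q j) (mapF p hp hp5)
  simp only [Polynomial.coeff_map, Int.coe_castRingHom] at h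
  rw [Polynomial.coeff_sub, Polynomial.coeff_X_pow, Polynomial.coeff_one,
    if_neg (by omega : ¬ j = p - 1), if_neg (by omega : ¬ j = 0), sub_zero] at h
  rwa [← ZMod.intCast_zmod_eq_zero_iff_dvd]

lemma asc_prod' (a n : ℕ) : ((a+1).ascFactorial n : ℤ) = ∏ k ∈ Finset.range n, ((a:ℤ) + k + 1) := by
  rw [asc_prod]
  push_cast
  exact Finset.prod_congr rfl (fun k _ => by ring)

lemma evalnegF (p : ℕ) (hp : p.Prime) (hp5 : 5 ≤ p) :
    (∏ k ∈ Finset.range (p-1), (X + C ((k:ℤ)+1))).eval (-(p:ℤ))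
      = (∏ k ∈ Finset.range (p-1), (X + C ((k:ℤ)+1))).eval 0 := by
  have heven : Even (p - 1) := Nat.Odd.sub_odd (hp.odd_of_ne_two (by omega)) odd_one
  rw [evalF, evalF]
  have h := Finset.prod_range_reflect (fun k : ℕ => -(p:ℤ) + k + 1) (p-1)
  rw [← h]
  have : ∀ j ∈ Finset.range (p-1),
      -(p:ℤ) + ((p - 1 - 1 - j : ℕ) : ℤ) + 1 = (-1) * ((0:ℤ) + j + 1) := by
    intro j hj
    rw [Finset.mem_range] at hj
    omega
  rw [Finset.prod_congr rfl this, Finset.prod_mul_distrib, Finset.prod_const,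
    Finset.card_range, heven.neg_one_pow, one_mul]

lemma evalsplit (p : ℕ) (hp5 : 5 ≤ p) (x : ℤ) :
    (∏ k ∈ Finset.range (p-1), (X + C ((k:ℤ)+1))).eval x
      = (∏ k ∈ Finset.range (p-1), (X + C ((k:ℤ)+1))).coeff 0
      + (∏ k ∈ Finset.range (p-1), (X + C ((k:ℤ)+1))).coeff 1 * x
      + (∏ k ∈ Finset.range (p-1), (X + C ((k:ℤ)+1))).coeff 2 * x^2
      + ∑ i ∈ Finset.Ico 3 p, (∏ k ∈ Finset.range (p-1), (X + C ((k:ℤ)+1))).coeff i * x^i := by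
  set F := ∏ k ∈ Finset.range (p-1), (X + C ((k:ℤ)+1)) with hF
  have h := Polynomial.eval_eq_sum_range (p := F) x
  rw [degF, (by omega : p - 1 + 1 = p)] at h
  rw [h, Finset.range_eq_Ico,
    ← Finset.sum_Ico_consecutive (fun i => F.coeff i * x ^ i) (by omega : 0 ≤ 3) (by omega : 3 ≤ p),
    ← Finset.range_eq_Ico]
  rw [Finset.sum_range_succ, Finset.sum_range_succ, Finset.sum_range_one]
  ring

theorem glaisher_congruence (p : ℕ) (hp : p.Prime) (hp5 : 5 ≤ p) (m : ℕ) :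
    ((m * p + p - 1).choose (p - 1) : ℤ) ≡ 1 [ZMOD ((p : ℤ) ^ 3)] := by
  set F := ∏ k ∈ Finset.range (p-1), (X + C ((k:ℤ)+1)) with hF
  set N : ℤ := ((m * p + p - 1).choose (p - 1) : ℤ) with hN
  have hfac : ((p-1).factorial : ℤ) ≠ 0 := Int.natCast_ne_zero.mpr (Nat.factorial_ne_zero _)
  -- c 0 = (p-1).factorial
  have hc0 : F.coeff 0 = ((p-1).factorial : ℤ) := by
    rw [Polynomial.coeff_zero_eq_eval_zero, hF, evalF]
    simpa [Nat.one_ascFactorial] using (asc_prod' 0 (p-1)).symm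
  -- eval at m*p
  have hkey : F.eval ((m:ℤ) * p) = ((p-1).factorial : ℤ) * N := by
    rw [hF, evalF]
    have : ∀ k ∈ Finset.range (p-1), (m:ℤ) * p + k + 1 = ((m*p : ℕ) : ℤ) + k + 1 := by
      intro k _; push_cast; ring
    rw [Finset.prod_congr rfl this, ← asc_prod' (m*p) (p-1),
      Nat.ascFactorial_eq_factorial_mul_choose]
    have : m * p + (p - 1) = m * p + p - 1 := by omega
    rw [this]
    push_cast
    ring
  -- divisibility of sums of high powers
  have hS3 : ∀ x : ℤ, (p:ℤ) ∣ x → ((p:ℤ))^3 ∣ ∑ i ∈ Finset.Ico 3 p, F.coeff i * x^i := by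
    intro x hx
    apply Finset.dvd_sum
    intro i hi
    rw [Finset.mem_Ico] at hi
    exact dvd_mul_of_dvd_right
      ((pow_dvd_pow_of_dvd hx 3).trans (pow_dvd_pow x hi.1)) _
  have hc2 : (p:ℤ) ∣ F.coeff 2 := coeff_dvd p hp hp5 2 (by omega) (by omega)
  -- reflection: p^2 ∣ c 1
  have hrefl := evalnegF p hp hp5
  rw [← Polynomial.coeff_zero_eq_eval_zero, ← hF, evalsplit p hp5] at hrefl
  have heq : (p:ℤ) * F.coeff 1
      = F.coeff 2 * (-(p:ℤ))^2 + ∑ i ∈ Finset.Ico 3 p, F.coeff i * (-(p:ℤ))^i := by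
    linarith [hrefl]
  have hc1 : (p:ℤ)^2 ∣ F.coeff 1 := by
    have hd : (p:ℤ)^3 ∣ (p:ℤ) * F.coeff 1 := by
      rw [heq]
      refine dvd_add ?_ (hS3 _ (dvd_neg.mpr dvd_rfl))
      rw [neg_pow]
      calc ((p:ℤ))^3 = (p:ℤ) * (p:ℤ)^2 := by ring
        _ ∣ F.coeff 2 * (p:ℤ)^2 := mul_dvd_mul_right hc2 _
        _ ∣ F.coeff 2 * ((-1)^2 * (p:ℤ)^2) := by rw [neg_one_sq, one_mul]
    have : (p:ℤ) * (p:ℤ)^2 ∣ (p:ℤ) * F.coeff 1 := by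
      rw [show (p:ℤ) * (p:ℤ)^2 = (p:ℤ)^3 by ring]; exact hd
    exact (mul_dvd_mul_iff_left (by exact_mod_cast hp.pos.ne' : (p:ℤ) ≠ 0)).mp this
  -- main divisibility
  have hmain : (p:ℤ)^3 ∣ ((p-1).factorial : ℤ) * (N - 1) := by
    have h1 := evalsplit p hp5 ((m:ℤ) * p)
    rw [hkey, hc0] at h1
    have h2 : ((p-1).factorial : ℤ) * (N - 1)
        = F.coeff 1 * ((m:ℤ) * p) + F.coeff 2 * ((m:ℤ)*p)^2
          + ∑ i ∈ Finset.Ico 3 p, F.coeff i * ((m:ℤ)*p)^i := by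
      rw [mul_sub, mul_one]; linarith [h1]
    rw [h2]
    refine dvd_add (dvd_add ?_ ?_) (hS3 _ (dvd_mul_left _ _))
    · calc ((p:ℤ))^3 = (p:ℤ)^2 * (p:ℤ) := by ring
        _ ∣ F.coeff 1 * ((m:ℤ) * p) := mul_dvd_mul hc1 (dvd_mul_left _ _)
    · calc ((p:ℤ))^3 = (p:ℤ) * (p:ℤ)^2 := by ring
        _ ∣ F.coeff 2 * ((m:ℤ)*p)^2 :=
          mul_dvd_mul hc2 (pow_dvd_pow_of_dvd (dvd_mul_left _ _) 2)
  -- cancel factorial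
  have hcop : IsCoprime ((p:ℤ)^3) (((p-1).factorial : ℕ) : ℤ) := by
    apply IsCoprime.pow_left
    rw [Nat.isCoprime_iff_coprime]
    exact (Nat.Prime.coprime_iff_not_dvd hp).mpr
      (fun h => absurd ((Nat.Prime.dvd_factorial hp).mp h) (by omega))
  have hdvd : (p:ℤ)^3 ∣ N - 1 := hcop.dvd_of_dvd_mul_left hmain
  have : N ≡ 1 [ZMOD ((p:ℤ)^3)] := (Int.modEq_iff_dvd.mpr (by simpa using hdvd)).symm
  exact this
end

section
/- For any prime p ≥ 5 and nonnegative integer m, the product (mp+1)(mp+2)···(mp+p−1) is congruent to (p−1)! modulo p^3. -/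
/-!
Put `f = (X + 1)(X + 2) ⋯ (X + p - 1) ∈ ℤ[X]`, so the product is `f(mp)` and `(p - 1)! = f(0)`.
Since `p ∣ mp`, `f(mp) ≡ f(0) + c₁ mp + c₂ (mp)² [ZMOD p³]`, so it suffices that `p² ∣ c₁` and
`p ∣ c₂`. Modulo `p` the roots of `f` are the nonzero residues, so `f ≡ X ^ (p - 1) - 1` and
`p ∣ c₂` as `p - 1 ≠ 2`. For odd `p` the symmetry `i ↦ p - i` gives `f(-p) = f(0)`, and the same
expansion at `x = -p` then gives `p³ ∣ c₁ p`.
-/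

open Polynomial Finset

theorem pow_dvd_eval_sub_sum_coeff {R : Type*} [CommRing R] (f : R[X]) (x : R) (n : ℕ) :
    x ^ n ∣ f.eval x - ∑ k ∈ range n, f.coeff k * x ^ k := by
  have hX : X ^ n ∣ f - ∑ k ∈ range n, C (f.coeff k) * X ^ k := by
    refine X_pow_dvd_iff.2 fun d hd => ?_
    simp [coeff_sub, finsetSum_coeff, hd]
  simpa [eval_finsetSum] using eval_dvd (x := x) hX

theorem pow_three_dvd_eval_sub_sum_coeff {R : Type*} [CommRing R] (f : R[X]) (x : R) :
    x ^ 3 ∣ f.eval x - (f.coeff 0 + f.coeff 1 * x + f.coeff 2 * x ^ 2) := by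
  simpa [sum_range_succ] using pow_dvd_eval_sub_sum_coeff f x 3

theorem pow_three_dvd_eval_sub_coeff_zero {R : Type*} [CommRing R] {f : R[X]} {p x : R}
    (hx : p ∣ x) (h1 : p ^ 2 ∣ f.coeff 1) (h2 : p ∣ f.coeff 2) :
    p ^ 3 ∣ f.eval x - f.coeff 0 := by
  have h0 := (pow_dvd_pow_of_dvd hx 3).trans (pow_three_dvd_eval_sub_sum_coeff f x)
  have h1x : p ^ 3 ∣ f.coeff 1 * x := pow_succ p 2 ▸ mul_dvd_mul h1 hx
  have h2x : p ^ 3 ∣ f.coeff 2 * x ^ 2 := pow_succ' p 2 ▸ mul_dvd_mul h2 (pow_dvd_pow_of_dvd hx 2)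
  convert (h0.add h1x).add h2x using 1
  ring

theorem ZMod.prod_Ico_one_eq_prod_units {p : ℕ} [Fact p.Prime] {M : Type*} [CommMonoid M]
    (f : ZMod p → M) : ∏ i ∈ Ico 1 p, f i = ∏ u : (ZMod p)ˣ, f u :=
  Finset.prod_bij'
    (fun i hi ↦ Units.mk0 (i : ZMod p) (mt (ZMod.natCast_eq_zero_iff i p).mp (by
      grind [Nat.not_dvd_of_pos_of_lt])))
    (fun u _ ↦ (u : ZMod p).val)
    (fun _ _ ↦ Finset.mem_univ _)
    (fun u _ ↦ by grind [u.ne_zero, ZMod.val_ne_zero, ZMod.val_lt])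
    (fun i hi ↦ by simp [ZMod.val_cast_of_lt (Finset.mem_Ico.mp hi).2])
    (fun u _ ↦ Units.ext (ZMod.natCast_zmod_val _))
    (fun _ _ ↦ rfl)

theorem FiniteField.prod_units_X_sub_C {K : Type*} [Field K] [Fintype K] [DecidableEq K] :
    ∏ u : Kˣ, (X - C (u : K)) = X ^ (Fintype.card K - 1) - 1 := by
  classical
  have := Lagrange.nodal_subgroup_eq_X_pow_card_sub_one (⊤ : Subgroup Kˣ)
  simpa [Lagrange.nodal, Fintype.card_units] using this

noncomputable def wilsonPoly (n : ℕ) : ℤ[X] := ∏ i ∈ Ico 1 n, (X + C (i : ℤ))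

theorem eval_wilsonPoly (n : ℕ) (x : ℤ) : (wilsonPoly n).eval x = ∏ i ∈ Ico 1 n, (x + i) := by
  simp [wilsonPoly, eval_prod]

theorem coeff_zero_wilsonPoly (n : ℕ) : (wilsonPoly n).coeff 0 = ((n - 1).factorial : ℕ) := by
  rw [coeff_zero_eq_eval_zero, eval_wilsonPoly]
  cases n with
  | zero => simp
  | succ n => simp [← prod_Ico_id_eq_factorial]

theorem eval_neg_wilsonPoly (n : ℕ) :
    (wilsonPoly n).eval (-(n : ℤ)) = (-1) ^ (n - 1) * ((n - 1).factorial : ℕ) := by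
  have hreflect : ∏ i ∈ Ico 1 n, ((n - i : ℕ) : ℤ) = ∏ i ∈ Ico 1 n, (i : ℤ) := by
    simpa using prod_Ico_reflect (fun j => (j : ℤ)) 1 (Nat.le_succ n)
  rw [← coeff_zero_wilsonPoly, coeff_zero_eq_eval_zero, eval_wilsonPoly, eval_wilsonPoly]
  simp only [zero_add]
  rw [← hreflect, ← Nat.card_Ico 1 n, ← prod_const, ← prod_mul_distrib]
  refine prod_congr rfl fun i hi => ?_
  rw [Nat.cast_sub (mem_Ico.1 hi).2.le]
  ring

theorem map_wilsonPoly (p : ℕ) [Fact p.Prime] :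
    (wilsonPoly p).map (Int.castRingHom (ZMod p)) = X ^ (p - 1) - 1 := by
  have h := FiniteField.prod_units_X_sub_C (K := ZMod p)
  rw [ZMod.card, ← Equiv.prod_comp (Equiv.neg (ZMod p)ˣ)] at h
  calc (wilsonPoly p).map (Int.castRingHom (ZMod p))
      _ = ∏ i ∈ Ico 1 p, (X + C (i : ZMod p)) := by simp [wilsonPoly, Polynomial.map_prod]
      _ = ∏ u : (ZMod p)ˣ, (X + C (u : ZMod p)) := ZMod.prod_Ico_one_eq_prod_units fun a => X + C a
      _ = X ^ (p - 1) - 1 := by simp [← h, sub_eq_add_neg]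

theorem prime_dvd_coeff_two_wilsonPoly {p : ℕ} (hp : p.Prime) (hp3 : p ≠ 3) :
    (p : ℤ) ∣ (wilsonPoly p).coeff 2 := by
  have := Fact.mk hp
  rw [← ZMod.intCast_zmod_eq_zero_iff_dvd, ← eq_intCast (Int.castRingHom (ZMod p)), ← coeff_map,
    map_wilsonPoly]
  have : 2 ≠ p - 1 := by omega
  simp [coeff_X_pow, coeff_one, this]

theorem sq_dvd_coeff_one_wilsonPoly {p : ℕ} (hp : p.Prime) (hp5 : 5 ≤ p) :
    (p : ℤ) ^ 2 ∣ (wilsonPoly p).coeff 1 := by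
  obtain ⟨c, hc⟩ := prime_dvd_coeff_two_wilsonPoly hp (by omega)
  have hodd : Even (p - 1) := Nat.Odd.sub_odd (hp.odd_of_ne_two (by omega)) odd_one
  have h := pow_three_dvd_eval_sub_sum_coeff (wilsonPoly p) (-(p : ℤ))
  rw [eval_neg_wilsonPoly, hodd.neg_one_pow, one_mul, ← coeff_zero_wilsonPoly, hc] at h
  -- `f(-p) = f(0)`, so the expansion at `-p` leaves `p³ ∣ c₁ p - c₂ p²`.
  have hexpand : ∀ a b : ℤ, a - (a + b * -p + p * c * (-p) ^ 2) = b * p - c * (p ^ 2 * p) := by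
    intros; ring
  rw [show (-(p : ℤ)) ^ 3 = -((p : ℤ) ^ 2 * p) by ring, neg_dvd, hexpand,
    dvd_sub_left (dvd_mul_left _ _)] at h
  exact (mul_dvd_mul_iff_right (by exact_mod_cast hp.ne_zero)).1 h

theorem glaisher_product_congruence (p : ℕ) (hp : p.Prime) (hp5 : 5 ≤ p) (m : ℕ) :
    (∏ i ∈ Finset.Ico 1 p, ((m : ℤ) * p + i)) ≡ ((p - 1).factorial : ℕ) [ZMOD ((p : ℤ) ^ 3)] := by
  rw [← eval_wilsonPoly, ← coeff_zero_wilsonPoly]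
  exact (Int.modEq_iff_dvd.2 (pow_three_dvd_eval_sub_coeff_zero (dvd_mul_left _ _)
    (sq_dvd_coeff_one_wilsonPoly hp hp5) (prime_dvd_coeff_two_wilsonPoly hp (by omega)))).symm
end

section
/- For nonnegative integers k and s with s ≥ 1, the identity C(k, s+1)·C(s+1, 2) = C(k−1, s+1)·C(s+1,2) + C(k−1, s)·C(s,2) + C(k−2, s)·s + C(k−2, s−1)·(s−1) + C(k−2, s−1) holds. -/
open Polynomial Finset

theorem binomial_identity (k s : ℕ) (hs : 1 ≤ s) (hk : 2 ≤ k) :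
    k.choose (s + 1) * (s + 1).choose 2 =
      (k - 1).choose (s + 1) * (s + 1).choose 2 + (k - 1).choose s * s.choose 2 +
        (k - 2).choose s * s + (k - 2).choose (s - 1) * (s - 1) + (k - 2).choose (s - 1) := by
  obtain ⟨k, rfl⟩ : ∃ k', k = k' + 2 := ⟨k - 2, by omega⟩
  obtain ⟨s, rfl⟩ : ∃ s', s = s' + 1 := ⟨s - 1, by omega⟩
  simp only [Nat.add_sub_cancel, show k + 2 - 1 = k + 1 from rfl]
  have p1 : (k + 2).choose (s + 2) = (k + 1).choose (s + 1) + (k + 1).choose (s + 2) :=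
    Nat.choose_succ_succ _ _
  have p2 : (k + 1).choose (s + 1) = k.choose s + k.choose (s + 1) :=
    Nat.choose_succ_succ _ _
  have p3 : (s + 2).choose 2 = (s + 1).choose 1 + (s + 1).choose 2 :=
    Nat.choose_succ_succ _ _
  have p4 : (s + 1).choose 1 = s + 1 := Nat.choose_one_right _
  rw [p1, p3, p4]
  nlinarith [p2]
end
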